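/- arXiv:1706.04767 — 2 statements merged into one kernel-verified Lean document; each statement's English description precedes it below -/
import Mathlib

section
/- The following two families of identities are equivalent: (a) for every nonnegative measurable functional H on E, every k ∈ ℤ and every t > 0, E[H(B^k Y) · 1{‖Y_{−k}‖ > t}] = t^{−α} E[H(tY) · 1{‖Y_k‖ > 1/t}]; (b) for every nonnegative measurable functional H on E and every k ∈ ℤ, E[H(B^k Θ) · 1{‖Θ_{−k}‖ ≠ 0}] = E[H(‖Θ_k‖^{−1} Θ) · ‖Θ_k‖^α], where the quantity inside the expectation on the right hand side is understood to be 0 when ‖Θ_k‖ = 0. -/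
/-!
Write `μ` for the law of `Θ` and `ν` for the Pareto law of `R`. By independence, every expectation
of a functional of `Y = R • Θ` is a `μ`-integral of a `ν`-integral over the radius `r`.

For (b) ⇒ (a), apply (b) to `Ψ z = ∫ 1{t < ‖r z₀‖} H(r z) dν(r)`. What remains is the identity
`‖x_k‖^α Ψ(x / ‖x_k‖) = t^{-α} ∫ 1{1/t < r ‖x_k‖} H(t r x) dν(r)`, which holds because the
weighted dilation `s^{-α} • (r ↦ s r)_* ν` of the Pareto law is the measure `α u^{-α-1} du` on
`(s, ∞)`: both sides integrate `u ↦ H(u x)` against that measure restricted to `(max t ‖x_k‖⁻¹, ∞)`.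

For (a) ⇒ (b), apply (a) at `t = 1` to `H` composed with the normalisation `y ↦ y / ‖y_k‖`,
weighted by the reciprocal of `P(R ‖Θ_{-k}‖ > 1 | Θ)`; integrating out `R` then yields (b).
-/

open MeasureTheory ProbabilityTheory Set Filter
open scoped ENNReal NNReal Topology

noncomputable section

/-- The iterated backshift operator: `(B^k x) j = x (j - k)`. -/
def backshift {V : Type*} (k : ℤ) (x : ℤ → V) : ℤ → V := fun j => x (j - k)

section Pareto

variable {α : ℝ} {ν : Measure ℝ}

lemma map_Ioi_eq_of_pareto {Ω : Type*} [MeasurableSpace Ω] {P : Measure Ω}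
    [IsProbabilityMeasure P] {R : Ω → ℝ} (hR : Measurable R)
    (hPareto : ∀ u : ℝ, 1 ≤ u → P {ω | u < R ω} = ENNReal.ofReal (u ^ (-α))) (a : ℝ) :
    P.map R (Ioi a) = ENNReal.ofReal (max a 1 ^ (-α)) := by
  rw [Measure.map_apply hR measurableSet_Ioi]
  rcases le_total 1 a with h | h
  · rw [max_eq_left h]
    exact hPareto a h
  · rw [max_eq_right h, Real.one_rpow, ENNReal.ofReal_one]
    refine le_antisymm prob_le_one ?_
    calc 1 = P {ω | 1 < R ω} := by rw [hPareto 1 le_rfl, Real.one_rpow, ENNReal.ofReal_one]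
      _ ≤ P (R ⁻¹' Ioi a) := measure_mono fun ω hω => h.trans_lt hω

lemma ae_pos_of_pareto [IsProbabilityMeasure ν]
    (hν : ∀ a, ν (Ioi a) = ENNReal.ofReal (max a 1 ^ (-α))) : ∀ᵐ r ∂ν, 0 < r := by
  rw [ae_iff_measure_eq measurableSet_Ioi.nullMeasurableSet, measure_univ]
  change ν (Ioi 0) = 1
  rw [hν, max_eq_right zero_le_one, Real.one_rpow, ENNReal.ofReal_one]

lemma measure_one_lt_mul_of_pareto (hν : ∀ a, ν (Ioi a) = ENNReal.ofReal (max a 1 ^ (-α)))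
    {c : ℝ} (hc : 0 < c) : ν {r | 1 < r * c} = ENNReal.ofReal (max c⁻¹ 1 ^ (-α)) := by
  simp_rw [← inv_lt_iff_one_lt_mul₀ hc]
  exact hν _

/-- For a Pareto law `ν` this is the measure `α u^{-α-1} du` restricted to `(s, ∞)`. -/
def paretoDilation (α : ℝ) (ν : Measure ℝ) (s : ℝ) : Measure ℝ :=
  ENNReal.ofReal (s ^ (-α)) • ν.map (s * ·)

instance [IsFiniteMeasure ν] (s : ℝ) : IsFiniteMeasure (paretoDilation α ν s) :=
  Measure.smul_finite _ ENNReal.ofReal_ne_top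

lemma lintegral_paretoDilation (s : ℝ) {g : ℝ → ℝ≥0∞} (hg : Measurable g) :
    ∫⁻ u, g u ∂paretoDilation α ν s = ENNReal.ofReal (s ^ (-α)) * ∫⁻ r, g (s * r) ∂ν := by
  rw [paretoDilation, lintegral_smul_measure, lintegral_map hg (measurable_const_mul s),
    smul_eq_mul]

lemma paretoDilation_Ioi (hν : ∀ a, ν (Ioi a) = ENNReal.ofReal (max a 1 ^ (-α))) {s : ℝ}
    (hs : 0 < s) (a : ℝ) : paretoDilation α ν s (Ioi a) = ENNReal.ofReal (max a s ^ (-α)) := by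
  have hpre : (s * ·) ⁻¹' Ioi a = Ioi (a / s) := by
    ext r
    simp [div_lt_iff₀' hs]
  rw [paretoDilation, Measure.smul_apply, Measure.map_apply (measurable_const_mul s)
    measurableSet_Ioi, hpre, hν, smul_eq_mul, ← ENNReal.ofReal_mul (by positivity),
    ← Real.mul_rpow hs.le (by positivity), mul_max_of_nonneg _ _ hs.le,
    mul_div_cancel₀ _ hs.ne', mul_one]

lemma paretoDilation_univ [IsProbabilityMeasure ν] (s : ℝ) :
    paretoDilation α ν s univ = ENNReal.ofReal (s ^ (-α)) := by
  rw [paretoDilation, Measure.smul_apply, Measure.map_apply (measurable_const_mul s)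
    MeasurableSet.univ, preimage_univ, measure_univ, smul_eq_mul, mul_one]

lemma restrict_Ioi_paretoDilation [IsProbabilityMeasure ν]
    (hν : ∀ a, ν (Ioi a) = ENNReal.ofReal (max a 1 ^ (-α))) {s : ℝ} (hs : 0 < s) (m : ℝ) :
    (paretoDilation α ν s).restrict (Ioi m) = paretoDilation α ν (max s m) := by
  have hsm : 0 < max s m := lt_max_of_lt_left hs
  have hIoi : ∀ a, (paretoDilation α ν s).restrict (Ioi m) (Ioi a)
      = paretoDilation α ν (max s m) (Ioi a) := fun a => by
    rw [Measure.restrict_apply measurableSet_Ioi, Ioi_inter_Ioi, paretoDilation_Ioi hν hs,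
      paretoDilation_Ioi hν hsm, max_comm s m, max_assoc]
  refine Measure.ext_of_Iic _ _ fun a => ?_
  rw [← compl_Ioi, measure_compl measurableSet_Ioi (measure_ne_top _ _),
    measure_compl measurableSet_Ioi (measure_ne_top _ _), hIoi, Measure.restrict_apply_univ,
    paretoDilation_Ioi hν hs, paretoDilation_univ, max_comm]

lemma max_rpow_mul_max_inv_rpow_neg {d : ℝ} (hd : 0 < d) :
    max d 1 ^ α * max d⁻¹ 1 ^ (-α) = d ^ α := by
  have hmax : max d⁻¹ 1 = d⁻¹ * max d 1 := by
    rw [mul_max_of_nonneg _ _ (inv_nonneg.2 hd.le), inv_mul_cancel₀ hd.ne', mul_one, max_comm]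
  have hpos : 0 < max d 1 := lt_max_of_lt_right one_pos
  rw [hmax, Real.mul_rpow (inv_nonneg.2 hd.le) hpos.le, Real.rpow_neg (inv_nonneg.2 hd.le),
    Real.inv_rpow hd.le, inv_inv, mul_left_comm, ← Real.rpow_add hpos, add_neg_cancel,
    Real.rpow_zero, mul_one]

end Pareto

lemma setLIntegral_smul_of_indepFun {Ω E : Type*} [MeasurableSpace Ω] {P : Measure Ω}
    [IsFiniteMeasure P] [MeasurableSpace E] [SMul ℝ E] [MeasurableSMul₂ ℝ E] {R : Ω → ℝ}
    {X : Ω → E} (hR : Measurable R) (hX : Measurable X) (hind : IndepFun R X P) {S : Set E}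
    (hS : MeasurableSet S) {F : E → ℝ≥0∞} (hF : Measurable F) :
    ∫⁻ ω in (fun ω => R ω • X ω) ⁻¹' S, F (R ω • X ω) ∂P
      = ∫⁻ x, ∫⁻ r, S.indicator F (r • x) ∂P.map R ∂P.map X := by
  have hG : Measurable fun p : E × ℝ => S.indicator F (p.2 • p.1) :=
    (hF.indicator hS).comp (measurable_snd.smul measurable_fst)
  rw [← lintegral_indicator (hS.preimage (by fun_prop : Measurable fun ω => R ω • X ω)),
    ← lintegral_prod _ hG.aemeasurable,
    ← (indepFun_iff_map_prod_eq_prod_map_map hX.aemeasurable hR.aemeasurable).1 hind.symm,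
    lintegral_map hG (hX.prodMk hR)]
  rfl

section Sequences

variable {V : Type*}

@[simp]
lemma backshift_apply (k : ℤ) (x : ℤ → V) (j : ℤ) : backshift k x j = x (j - k) := rfl

lemma backshift_smul [SMul ℝ V] (k : ℤ) (r : ℝ) (x : ℤ → V) :
    backshift k (r • x) = r • backshift k x := rfl

@[fun_prop]
lemma measurable_backshift [MeasurableSpace V] (k : ℤ) : Measurable (backshift (V := V) k) :=
  measurable_pi_lambda _ fun j => measurable_pi_apply (j - k)

variable [NormedAddCommGroup V] [NormedSpace ℝ V] {α : ℝ}

lemma norm_smul_apply_of_pos {r : ℝ} (hr : 0 < r) (x : ℤ → V) (j : ℤ) :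
    ‖(r • x) j‖ = r * ‖x j‖ := by
  rw [Pi.smul_apply, norm_smul, Real.norm_of_nonneg hr.le]

lemma lintegral_indicator_smul_eq_mul {ν : Measure ℝ} (hν : ∀ᵐ r ∂ν, 0 < r) (a : ℝ) (j : ℤ)
    {x : ℤ → V} {F : (ℤ → V) → ℝ≥0∞} {b : ℝ≥0∞} (hF : ∀ r : ℝ, 0 < r → F (r • x) = b) :
    ∫⁻ r, {y | a < ‖y j‖}.indicator F (r • x) ∂ν = b * ν {r | a < r * ‖x j‖} := by
  rw [← lintegral_indicator_const (measurableSet_lt measurable_const (measurable_mul_const _))]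
  refine lintegral_congr_ae (hν.mono fun r hr => ?_)
  simp only [indicator_apply, mem_ofPred_eq, norm_smul_apply_of_pos hr, hF r hr]

/-- The weight `max (‖y k‖ / ‖y 0‖) 1 ^ α` is `1 / P(R > ‖y k‖ / ‖y 0‖)`. -/
def weightedNormalize (α : ℝ) (k : ℤ) (H : (ℤ → V) → ℝ≥0∞) (y : ℤ → V) : ℝ≥0∞ :=
  H (‖y k‖⁻¹ • y) * ENNReal.ofReal (max (‖y k‖ / ‖y 0‖) 1 ^ α)

lemma lintegral_indicator_weightedNormalize_comp_backshift {ν : Measure ℝ}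
    [IsProbabilityMeasure ν] (hν : ∀ a, ν (Ioi a) = ENNReal.ofReal (max a 1 ^ (-α)))
    {H : (ℤ → V) → ℝ≥0∞} {k : ℤ} {x : ℤ → V} (hx : ‖x 0‖ = 1) :
    ∫⁻ r, {y | 1 < ‖y (-k)‖}.indicator (weightedNormalize α k H ∘ backshift k) (r • x) ∂ν
      = {x | ‖x (-k)‖ ≠ 0}.indicator (H ∘ backshift k) x := by
  rw [lintegral_indicator_smul_eq_mul (ae_pos_of_pareto hν) 1 (-k)
    (b := H (backshift k x) * ENNReal.ofReal (max ‖x (-k)‖⁻¹ 1 ^ α)) fun r hr => ?_]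
  · rcases (norm_nonneg (x (-k))).eq_or_lt with hc | hc
    · rw [indicator_of_notMem (by simpa using hc.symm), ← hc]
      simp [not_lt.mpr zero_le_one]
    · rw [indicator_of_mem hc.ne', measure_one_lt_mul_of_pareto hν hc, mul_assoc,
        ← ENNReal.ofReal_mul (by positivity), ← Real.rpow_add (lt_max_of_lt_right one_pos),
        add_neg_cancel, Real.rpow_zero, ENNReal.ofReal_one, mul_one, Function.comp_apply]
  · have hk : ‖(r • backshift k x) k‖ = r := by
      rw [norm_smul_apply_of_pos hr, backshift_apply, sub_self, hx, mul_one]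
    have h0 : ‖(r • backshift k x) 0‖ = r * ‖x (-k)‖ := by
      rw [norm_smul_apply_of_pos hr, backshift_apply, zero_sub]
    rw [Function.comp_apply, backshift_smul, weightedNormalize, hk, h0, smul_smul,
      inv_mul_cancel₀ hr.ne', one_smul, div_mul_cancel_left₀ hr.ne']

lemma lintegral_indicator_weightedNormalize (hα : 0 < α) {ν : Measure ℝ}
    [IsProbabilityMeasure ν] (hν : ∀ a, ν (Ioi a) = ENNReal.ofReal (max a 1 ^ (-α)))
    {H : (ℤ → V) → ℝ≥0∞} {k : ℤ} {x : ℤ → V} (hx : ‖x 0‖ = 1) :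
    ∫⁻ r, {y | 1 < ‖y k‖}.indicator (weightedNormalize α k H) (r • x) ∂ν
      = H (‖x k‖⁻¹ • x) * ENNReal.ofReal (‖x k‖ ^ α) := by
  rw [lintegral_indicator_smul_eq_mul (ae_pos_of_pareto hν) 1 k
    (b := H (‖x k‖⁻¹ • x) * ENNReal.ofReal (max ‖x k‖ 1 ^ α)) fun r hr => ?_]
  · rcases (norm_nonneg (x k)).eq_or_lt with hd | hd
    · simp [← hd, Real.zero_rpow hα.ne', not_lt.mpr zero_le_one]
    · rw [measure_one_lt_mul_of_pareto hν hd, mul_assoc, ← ENNReal.ofReal_mul (by positivity),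
        max_rpow_mul_max_inv_rpow_neg hd]
  · rw [weightedNormalize, norm_smul_apply_of_pos hr, norm_smul_apply_of_pos hr, hx, mul_one,
      smul_smul, mul_inv_rev, mul_assoc, inv_mul_cancel₀ hr.ne', mul_one,
      mul_div_cancel_left₀ _ hr.ne']

variable [MeasurableSpace V] [BorelSpace V]

lemma lintegral_indicator_smul_inv_norm_mul_rpow {ν : Measure ℝ} [IsProbabilityMeasure ν]
    (hν : ∀ a, ν (Ioi a) = ENNReal.ofReal (max a 1 ^ (-α))) {t : ℝ} (ht : 0 < t)
    {H : (ℤ → V) → ℝ≥0∞} (hH : Measurable H) {x : ℤ → V} (hx : ‖x 0‖ = 1) (k : ℤ) :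
    (∫⁻ r, {y | t < ‖y 0‖}.indicator H (r • ‖x k‖⁻¹ • x) ∂ν) * ENNReal.ofReal (‖x k‖ ^ α)
      = ENNReal.ofReal (t ^ (-α)) *
          ∫⁻ r, {y | 1 / t < ‖y k‖}.indicator (fun y => H (t • y)) (r • x) ∂ν := by
  have hν₀ := ae_pos_of_pareto hν
  rcases (norm_nonneg (x k)).eq_or_lt with hd | hd
  · have hxk : x k = 0 := norm_eq_zero.1 hd.symm
    simp [hxk, ht.le, not_lt.mpr]
  set g : ℝ → ℝ≥0∞ := fun s => H (s • x)
  have hg : ∀ a, Measurable ((Ioi a).indicator g) := fun a =>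
    (by fun_prop : Measurable g).indicator measurableSet_Ioi
  have hL : ∫⁻ r, {y | t < ‖y 0‖}.indicator H (r • ‖x k‖⁻¹ • x) ∂ν
      = ∫⁻ r, (Ioi t).indicator g (‖x k‖⁻¹ * r) ∂ν := by
    refine lintegral_congr_ae (hν₀.mono fun r hr => ?_)
    dsimp only
    rw [smul_smul, mul_comm r]
    simp only [indicator_apply, mem_ofPred_eq, mem_Ioi,
      norm_smul_apply_of_pos (mul_pos (inv_pos.2 hd) hr), hx, mul_one, g]
  have hR : ∫⁻ r, {y | 1 / t < ‖y k‖}.indicator (fun y => H (t • y)) (r • x) ∂ν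
      = ∫⁻ r, (Ioi ‖x k‖⁻¹).indicator g (t * r) ∂ν := by
    refine lintegral_congr_ae (hν₀.mono fun r hr => ?_)
    have hiff : 1 / t < r * ‖x k‖ ↔ ‖x k‖⁻¹ < t * r := by
      rw [div_lt_iff₀ ht, inv_lt_iff_one_lt_mul₀ hd]
      ring_nf
    simp only [indicator_apply, mem_ofPred_eq, mem_Ioi, norm_smul_apply_of_pos hr, hiff,
      smul_smul, g]
  calc (∫⁻ r, {y | t < ‖y 0‖}.indicator H (r • ‖x k‖⁻¹ • x) ∂ν) * ENNReal.ofReal (‖x k‖ ^ α)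
      = ∫⁻ s in Ioi t, g s ∂paretoDilation α ν ‖x k‖⁻¹ := by
        rw [← lintegral_indicator measurableSet_Ioi, lintegral_paretoDilation _ (hg _), hL,
          Real.rpow_neg (inv_nonneg.2 hd.le), Real.inv_rpow hd.le, inv_inv, mul_comm]
    _ = ∫⁻ s in Ioi ‖x k‖⁻¹, g s ∂paretoDilation α ν t := by
        rw [restrict_Ioi_paretoDilation hν (inv_pos.2 hd), restrict_Ioi_paretoDilation hν ht,
          max_comm]
    _ = _ := by
        rw [← lintegral_indicator measurableSet_Ioi, lintegral_paretoDilation _ (hg _), hR]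

variable [SecondCountableTopology V]

/-- Identity (a) for `Y = R • Θ`, written through the law `μ` of `Θ` and the law `ν` of `R`. -/
def TailTimeChange (α : ℝ) (μ : Measure (ℤ → V)) (ν : Measure ℝ) : Prop :=
  ∀ H : (ℤ → V) → ℝ≥0∞, Measurable H → ∀ k : ℤ, ∀ t : ℝ, 0 < t →
    ∫⁻ x, ∫⁻ r, {y | t < ‖y (-k)‖}.indicator (H ∘ backshift k) (r • x) ∂ν ∂μ
      = ENNReal.ofReal (t ^ (-α)) *
          ∫⁻ x, ∫⁻ r, {y | 1 / t < ‖y k‖}.indicator (fun y => H (t • y)) (r • x) ∂ν ∂μ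

def SpectralTimeChange (α : ℝ) (μ : Measure (ℤ → V)) : Prop :=
  ∀ H : (ℤ → V) → ℝ≥0∞, Measurable H → ∀ k : ℤ,
    ∫⁻ x in {x | ‖x (-k)‖ ≠ 0}, H (backshift k x) ∂μ
      = ∫⁻ x, H (‖x k‖⁻¹ • x) * ENNReal.ofReal (‖x k‖ ^ α) ∂μ

lemma tailTimeChange_map_iff {Ω : Type*} [MeasurableSpace Ω] {P : Measure Ω}
    [IsFiniteMeasure P] {X : Ω → ℤ → V} {R : Ω → ℝ} (hX : Measurable X) (hR : Measurable R)
    (hind : IndepFun R X P) :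
    TailTimeChange α (P.map X) (P.map R) ↔
      ∀ H : (ℤ → V) → ℝ≥0∞, Measurable H → ∀ k : ℤ, ∀ t : ℝ, 0 < t →
        ∫⁻ ω in {ω | t < ‖(R ω • X ω) (-k)‖}, H (backshift k (R ω • X ω)) ∂P
          = ENNReal.ofReal (t ^ (-α)) *
              ∫⁻ ω in {ω | 1 / t < ‖(R ω • X ω) k‖}, H (t • (R ω • X ω)) ∂P := by
  refine forall₂_congr fun H hH => forall₃_congr fun k t _ => ?_
  rw [← setLIntegral_smul_of_indepFun hR hX hind (by measurability) (by fun_prop),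
    ← setLIntegral_smul_of_indepFun hR hX hind (by measurability) (by fun_prop)]
  rfl

lemma spectralTimeChange_map_iff {Ω : Type*} [MeasurableSpace Ω] {P : Measure Ω}
    {X : Ω → ℤ → V} (hX : Measurable X) :
    SpectralTimeChange α (P.map X) ↔
      ∀ H : (ℤ → V) → ℝ≥0∞, Measurable H → ∀ k : ℤ,
        ∫⁻ ω in {ω | ‖X ω (-k)‖ ≠ 0}, H (backshift k (X ω)) ∂P
          = ∫⁻ ω, H (‖X ω k‖⁻¹ • X ω) * ENNReal.ofReal (‖X ω k‖ ^ α) ∂P := by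
  refine forall₂_congr fun H hH => forall_congr' fun k => ?_
  rw [setLIntegral_map (by measurability) (by fun_prop) hX, lintegral_map (by fun_prop) hX]
  rfl

lemma spectralTimeChange_of_tailTimeChange (hα : 0 < α) {μ : Measure (ℤ → V)} {ν : Measure ℝ}
    [IsProbabilityMeasure ν] (hμ : ∀ᵐ x ∂μ, ‖x 0‖ = 1)
    (hν : ∀ a, ν (Ioi a) = ENNReal.ofReal (max a 1 ^ (-α))) (h : TailTimeChange α μ ν) :
    SpectralTimeChange α μ := by
  intro H hH k
  have key := h (weightedNormalize α k H) (by unfold weightedNormalize; fun_prop) k 1 one_pos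
  simp only [Real.one_rpow, ENNReal.ofReal_one, one_mul, div_one, one_smul] at key
  calc ∫⁻ x in {x | ‖x (-k)‖ ≠ 0}, H (backshift k x) ∂μ
      = ∫⁻ x, ∫⁻ r, {y | 1 < ‖y (-k)‖}.indicator
          (weightedNormalize α k H ∘ backshift k) (r • x) ∂ν ∂μ := by
        rw [← lintegral_indicator (by measurability)]
        exact lintegral_congr_ae (hμ.mono fun x hx =>
          (lintegral_indicator_weightedNormalize_comp_backshift hν hx).symm)
    _ = ∫⁻ x, ∫⁻ r, {y | 1 < ‖y k‖}.indicator (weightedNormalize α k H) (r • x) ∂ν ∂μ := key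
    _ = ∫⁻ x, H (‖x k‖⁻¹ • x) * ENNReal.ofReal (‖x k‖ ^ α) ∂μ :=
        lintegral_congr_ae (hμ.mono fun x hx =>
          lintegral_indicator_weightedNormalize hα hν hx)

lemma tailTimeChange_of_spectralTimeChange {μ : Measure (ℤ → V)} {ν : Measure ℝ}
    [IsProbabilityMeasure ν] (hμ : ∀ᵐ x ∂μ, ‖x 0‖ = 1)
    (hν : ∀ a, ν (Ioi a) = ENNReal.ofReal (max a 1 ^ (-α))) (h : SpectralTimeChange α μ) :
    TailTimeChange α μ ν := by
  intro H hH k t ht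
  set Ψ : (ℤ → V) → ℝ≥0∞ := fun z => ∫⁻ r, {y | t < ‖y 0‖}.indicator H (r • z) ∂ν
  have hΨ : Measurable Ψ := by
    have hF : Measurable fun p : (ℤ → V) × ℝ => {y | t < ‖y 0‖}.indicator H (p.2 • p.1) :=
      (hH.indicator (measurableSet_lt measurable_const (by fun_prop))).comp
        (measurable_snd.smul measurable_fst)
    exact hF.lintegral_prod_right'
  have hΨ₀ : ∀ z : ℤ → V, z 0 = 0 → Ψ z = 0 := fun z hz => by
    simp [Ψ, hz, ht.le, not_lt.mpr]
  calc ∫⁻ x, ∫⁻ r, {y | t < ‖y (-k)‖}.indicator (H ∘ backshift k) (r • x) ∂ν ∂μ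
      = ∫⁻ x, Ψ (backshift k x) ∂μ := by
        have hpre : {y : ℤ → V | t < ‖y (-k)‖} = backshift k ⁻¹' {y | t < ‖y 0‖} := by
          ext y
          simp
        simp_rw [hpre, indicator_comp_right, backshift_smul, Ψ]
    _ = ∫⁻ x in {x | ‖x (-k)‖ ≠ 0}, Ψ (backshift k x) ∂μ := by
        rw [← lintegral_indicator (by measurability)]
        refine lintegral_congr fun x => ?_
        by_cases hx : x (-k) = 0
        · rw [indicator_of_notMem (by simpa using hx), hΨ₀ _ (by simpa using hx)]
        · rw [indicator_of_mem (by simpa using hx)]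
    _ = ∫⁻ x, Ψ (‖x k‖⁻¹ • x) * ENNReal.ofReal (‖x k‖ ^ α) ∂μ := h Ψ hΨ k
    _ = ∫⁻ x, ENNReal.ofReal (t ^ (-α)) *
          ∫⁻ r, {y | 1 / t < ‖y k‖}.indicator (fun y => H (t • y)) (r • x) ∂ν ∂μ :=
        lintegral_congr_ae (hμ.mono fun x hx =>
          lintegral_indicator_smul_inv_norm_mul_rpow hν ht hH hx k)
    _ = _ := lintegral_const_mul' _ _ ENNReal.ofReal_ne_top

end Sequences

theorem statement1_general
    -- `V` plays the role of `ℝ^d` (`d ≥ 1`) equipped with an arbitrary norm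
    {V : Type*} [NormedAddCommGroup V] [NormedSpace ℝ V] [FiniteDimensional ℝ V]
    [MeasurableSpace V] [BorelSpace V]
    (α : ℝ) (hα : 0 < α)
    {Ω : Type*} [MeasurableSpace Ω] (P : Measure Ω) [IsProbabilityMeasure P]
    (Θ : Ω → ℤ → V) (hΘmeas : Measurable Θ)
    (hΘ0 : ∀ᵐ ω ∂P, ‖Θ ω 0‖ = 1)
    (R : Ω → ℝ) (hRmeas : Measurable R)
    (hPareto : ∀ u : ℝ, 1 ≤ u → P {ω | u < R ω} = ENNReal.ofReal (u ^ (-α)))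
    (hindep : IndepFun R Θ P)
    (Y : Ω → ℤ → V) (hYdef : ∀ ω, Y ω = R ω • Θ ω) :
    (∀ H : (ℤ → V) → ℝ≥0∞, Measurable H → ∀ k : ℤ, ∀ t : ℝ, 0 < t →
        ∫⁻ ω in {ω | t < ‖Y ω (-k)‖}, H (backshift k (Y ω)) ∂P
          = ENNReal.ofReal (t ^ (-α)) *
              ∫⁻ ω in {ω | 1 / t < ‖Y ω k‖}, H (t • Y ω) ∂P)
      ↔
    (∀ H : (ℤ → V) → ℝ≥0∞, Measurable H → ∀ k : ℤ,
        ∫⁻ ω in {ω | ‖Θ ω (-k)‖ ≠ 0}, H (backshift k (Θ ω)) ∂P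
          = ∫⁻ ω, H (‖Θ ω k‖⁻¹ • Θ ω) * ENNReal.ofReal (‖Θ ω k‖ ^ α) ∂P) := by
  obtain rfl : Y = fun ω => R ω • Θ ω := funext hYdef
  have := Measure.isProbabilityMeasure_map (μ := P) hRmeas.aemeasurable
  have hν := map_Ioi_eq_of_pareto hRmeas hPareto
  have hμ : ∀ᵐ x ∂P.map Θ, ‖x 0‖ = 1 :=
    (ae_map_iff hΘmeas.aemeasurable (measurableSet_eq_fun (by fun_prop) measurable_const)).2 hΘ0
  refine (tailTimeChange_map_iff hΘmeas hRmeas hindep).symm.trans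
    (Iff.trans ?_ (spectralTimeChange_map_iff hΘmeas))
  exact ⟨spectralTimeChange_of_tailTimeChange hα hμ hν, tailTimeChange_of_spectralTimeChange hμ hν⟩

/-- **Equivalence of the two formulations of the time change formula.**
With `Y = R·Θ`, `R` Pareto(α) independent of `Θ` and `‖Θ_0‖ = 1` a.s., the family of
identities `E[H(B^k Y)·1{‖Y_{−k}‖>t}] = t^{−α} E[H(tY)·1{‖Y_k‖>1/t}]` (all nonnegative
measurable `H`, all `k ∈ ℤ`, `t > 0`) is equivalent to the family
`E[H(B^k Θ)·1{‖Θ_{−k}‖≠0}] = E[H(‖Θ_k‖⁻¹Θ)·‖Θ_k‖^α]` (all nonnegative measurable `H`,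
all `k ∈ ℤ`), the right-hand side integrand being `0` when `‖Θ_k‖ = 0`. -/
theorem statement1
    -- `V` plays the role of `ℝ^d` (`d ≥ 1`) equipped with an arbitrary norm
    {V : Type*} [NormedAddCommGroup V] [NormedSpace ℝ V] [FiniteDimensional ℝ V]
    [Nontrivial V] [MeasurableSpace V] [BorelSpace V]
    (α : ℝ) (hα : 0 < α)
    {Ω : Type*} [MeasurableSpace Ω] (P : Measure Ω) [IsProbabilityMeasure P]
    (Θ : Ω → ℤ → V) (hΘmeas : Measurable Θ)
    (hΘ0 : ∀ᵐ ω ∂P, ‖Θ ω 0‖ = 1)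
    (R : Ω → ℝ) (hRmeas : Measurable R)
    (hPareto : ∀ u : ℝ, 1 ≤ u → P {ω | u < R ω} = ENNReal.ofReal (u ^ (-α)))
    (hindep : IndepFun R Θ P)
    (Y : Ω → ℤ → V) (hYdef : ∀ ω, Y ω = R ω • Θ ω) :
    (∀ H : (ℤ → V) → ℝ≥0∞, Measurable H → ∀ k : ℤ, ∀ t : ℝ, 0 < t →
        ∫⁻ ω in {ω | t < ‖Y ω (-k)‖}, H (backshift k (Y ω)) ∂P
          = ENNReal.ofReal (t ^ (-α)) *
              ∫⁻ ω in {ω | 1 / t < ‖Y ω k‖}, H (t • Y ω) ∂P)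
      ↔
    (∀ H : (ℤ → V) → ℝ≥0∞, Measurable H → ∀ k : ℤ,
        ∫⁻ ω in {ω | ‖Θ ω (-k)‖ ≠ 0}, H (backshift k (Θ ω)) ∂P
          = ∫⁻ ω, H (‖Θ ω k‖⁻¹ • Θ ω) * ENNReal.ofReal (‖Θ ω k‖ ^ α) ∂P) :=
  statement1_general α hα P Θ hΘmeas hΘ0 R hRmeas hPareto hindep Y hYdef
end
end

section
/- The candidate extremal index satisfies ϑ := P(sup_{j≥1} ‖Y_j‖ ≤ 1) = P(sup_{j≤−1} ‖Y_j‖ ≤ 1); equivalently, P(sup_{j≥1} ‖Y_j‖ > 1) = P(sup_{j≤−1} ‖Y_j‖ > 1). -/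
/-!
Split the event `{y₀ ∈ S, y visits S at some time j > 0}` according to the first such time `n`,
and `{y₀ ∈ S, y visits S at some time j < 0}` according to the last such time `-n`. The shift by
`n` carries "consecutive visits to `S` at times `0` and `n`" onto "consecutive visits at `-n` and
`0`", so for a shift-invariant measure the two decompositions have equal pieces. Since the law of
`Y` is the tail measure restricted to `{‖y₀‖ > 1}`, taking `S = {‖v‖ > 1}` gives the claim.
-/

open MeasureTheory ProbabilityTheory Set Filter
open scoped ENNReal NNReal Topology
open Function

noncomputable section

section Backshift

variable {X : Type*}

lemma backshift_backshift (k m : ℤ) (x : ℤ → X) :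
    backshift k (backshift m x) = backshift (k + m) x := by
  funext j
  simp only [backshift, sub_sub]

lemma backshift_zero : (backshift 0 : (ℤ → X) → ℤ → X) = id := by
  funext x j
  simp [backshift]

variable [MeasurableSpace X]

lemma measurable_backshift_s8 (k : ℤ) : Measurable (backshift k : (ℤ → X) → ℤ → X) :=
  measurable_pi_lambda _ fun j => measurable_pi_apply (j - k)

lemma map_map_backshift (μ : Measure (ℤ → X)) (k m : ℤ) :
    (μ.map (backshift m)).map (backshift k) = μ.map (backshift (k + m)) := by
  rw [Measure.map_map (measurable_backshift_s8 k) (measurable_backshift_s8 m)]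
  congr 1
  funext x
  exact backshift_backshift k m x

lemma map_backshift_eq_self {μ : Measure (ℤ → X)} (hμ : μ.map (backshift 1) = μ) (k : ℤ) :
    μ.map (backshift k) = μ := by
  induction k using Int.induction_on with
  | zero => rw [backshift_zero, Measure.map_id]
  | succ i ih => rw [add_comm, ← map_map_backshift, ih, hμ]
  | pred i ih =>
    conv_lhs => rw [← hμ]
    rw [map_map_backshift, sub_add_cancel, ih]

end Backshift

section ConsecutiveVisits

variable {X : Type*} (S : Set X)

def consecutiveVisits (a b : ℤ) : Set (ℤ → X) :=
  {y | a < b ∧ y a ∈ S ∧ y b ∈ S ∧ ∀ j ∈ Ioo a b, y j ∉ S}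

lemma preimage_backshift_consecutiveVisits (k a b : ℤ) :
    backshift k ⁻¹' consecutiveVisits S a b = consecutiveVisits S (a - k) (b - k) := by
  ext y
  simp only [consecutiveVisits, mem_preimage, mem_ofPred_eq, backshift, mem_Ioo]
  refine and_congr (sub_lt_sub_iff_right k).symm (and_congr Iff.rfl (and_congr Iff.rfl ?_))
  exact ⟨fun h i hi => by simpa using h (i + k) (by omega), fun h j hj => h (j - k) (by omega)⟩

lemma pairwise_disjoint_consecutiveVisits_same_start (a : ℤ) :
    Pairwise (Disjoint on consecutiveVisits S a) := by
  intro b c hbc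
  wlog hlt : b < c generalizing b c
  · exact (this hbc.symm (by omega)).symm
  exact disjoint_left.mpr fun y hb hc => hc.2.2.2 b ⟨hb.1, hlt⟩ hb.2.2.1

lemma pairwise_disjoint_consecutiveVisits_same_end (b : ℤ) :
    Pairwise (Disjoint on fun a => consecutiveVisits S a b) := by
  intro a c hac
  wlog hlt : a < c generalizing a c
  · exact (this hac.symm (by omega)).symm
  exact disjoint_left.mpr fun y ha hc => ha.2.2.2 c ⟨hlt, hc.1⟩ hc.2.1

lemma iUnion_consecutiveVisits_from_zero :
    ⋃ b, consecutiveVisits S 0 b = {y | y 0 ∈ S ∧ ∃ j > 0, y j ∈ S} := by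
  ext y
  simp only [consecutiveVisits, mem_iUnion, mem_ofPred_eq]
  constructor
  · rintro ⟨b, hb, h0, hbS, -⟩
    exact ⟨h0, b, hb, hbS⟩
  · rintro ⟨h0, hex⟩
    obtain ⟨b, ⟨hb, hbS⟩, hmin⟩ := Int.exists_least_of_bdd ⟨0, fun z hz => hz.1.le⟩ hex
    exact ⟨b, hb, h0, hbS, fun j hj hjS => (hmin j ⟨hj.1, hjS⟩).not_gt hj.2⟩

lemma iUnion_consecutiveVisits_to_zero :
    ⋃ a, consecutiveVisits S a 0 = {y | y 0 ∈ S ∧ ∃ j < 0, y j ∈ S} := by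
  ext y
  simp only [consecutiveVisits, mem_iUnion, mem_ofPred_eq]
  constructor
  · rintro ⟨a, ha, haS, h0, -⟩
    exact ⟨h0, a, ha, haS⟩
  · rintro ⟨h0, hex⟩
    obtain ⟨a, ⟨ha, haS⟩, hmax⟩ := Int.exists_greatest_of_bdd ⟨0, fun z hz => hz.1.le⟩ hex
    exact ⟨a, ha, haS, h0, fun j hj hjS => (hmax j ⟨hj.2, hjS⟩).not_gt hj.1⟩

variable [MeasurableSpace X] {S}

lemma measurableSet_consecutiveVisits (hS : MeasurableSet S) (a b : ℤ) :
    MeasurableSet (consecutiveVisits S a b) := by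
  have hvisit : ∀ j, MeasurableSet {y : ℤ → X | y j ∈ S} := fun j => measurable_pi_apply j hS
  simp only [consecutiveVisits, ofPred_and, ofPred_forall]
  exact (MeasurableSet.const _).inter <| (hvisit a).inter <| (hvisit b).inter <|
    .iInter fun j => .iInter fun _ => (hvisit j).compl

theorem measure_visit_future_eq_past {μ : Measure (ℤ → X)} (hμ : μ.map (backshift 1) = μ)
    (hS : MeasurableSet S) :
    μ {y | y 0 ∈ S ∧ ∃ j > 0, y j ∈ S} = μ {y | y 0 ∈ S ∧ ∃ j < 0, y j ∈ S} := by
  rw [← iUnion_consecutiveVisits_from_zero, ← iUnion_consecutiveVisits_to_zero,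
    measure_iUnion (pairwise_disjoint_consecutiveVisits_same_start S 0)
      (measurableSet_consecutiveVisits hS 0),
    measure_iUnion (pairwise_disjoint_consecutiveVisits_same_end S 0)
      (fun a => measurableSet_consecutiveVisits hS a 0)]
  conv_rhs => rw [← (Equiv.neg ℤ).tsum_eq]
  refine tsum_congr fun n => ?_
  calc μ (consecutiveVisits S 0 n) = μ.map (backshift n) (consecutiveVisits S 0 n) := by
        rw [map_backshift_eq_self hμ]
    _ = μ (consecutiveVisits S (-n) 0) := by
        rw [Measure.map_apply (measurable_backshift_s8 n) (measurableSet_consecutiveVisits hS 0 n),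
          preimage_backshift_consecutiveVisits, zero_sub, sub_self]

end ConsecutiveVisits

theorem statement8_general
    -- `V` plays the role of `ℝ^d` (`d ≥ 1`) equipped with an arbitrary norm
    {V : Type*} [NormedAddCommGroup V]
    [MeasurableSpace V] [BorelSpace V]
    -- the tail measure and its properties
    (ν : Measure (ℤ → V))
    (hνshift : ν.map (backshift 1) = ν)
    -- the tail process `Y` and the spectral tail process `Θ`
    {Ω : Type*} [MeasurableSpace Ω] (P : Measure Ω) [IsProbabilityMeasure P]
    (Y : Ω → ℤ → V) (hYmeas : Measurable Y)
    (hYlaw : P.map Y = ν.restrict {y : ℤ → V | 1 < ‖y 0‖})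
    :
    P {ω | ∀ j : ℤ, 1 ≤ j → ‖Y ω j‖ ≤ 1} = P {ω | ∀ j : ℤ, j ≤ -1 → ‖Y ω j‖ ≤ 1} ∧
      P {ω | ∃ j : ℤ, 1 ≤ j ∧ 1 < ‖Y ω j‖} = P {ω | ∃ j : ℤ, j ≤ -1 ∧ 1 < ‖Y ω j‖} := by
  set S : Set V := {v | 1 < ‖v‖}
  have hS : MeasurableSet S := measurableSet_lt measurable_const measurable_norm
  have hvisits (p : ℤ → Prop) : MeasurableSet {y : ℤ → V | ∃ j, p j ∧ y j ∈ S} := by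
    simp only [ofPred_exists, ofPred_and]
    exact .iUnion fun j => (MeasurableSet.const _).inter (measurable_pi_apply j hS)
  have hlaw (p q : ℤ → Prop) (hpq : ∀ j, p j ↔ q j) :
      P {ω | ∃ j, p j ∧ 1 < ‖Y ω j‖} = ν {y | y 0 ∈ S ∧ ∃ j, q j ∧ y j ∈ S} := by
    change P (Y ⁻¹' {y | ∃ j, p j ∧ y j ∈ S}) = _
    rw [← Measure.map_apply hYmeas (hvisits p), hYlaw,
      Measure.restrict_apply (hvisits p), inter_comm]
    simp only [hpq]
    rfl
  have hexceed :
      P {ω | ∃ j : ℤ, 1 ≤ j ∧ 1 < ‖Y ω j‖} = P {ω | ∃ j : ℤ, j ≤ -1 ∧ 1 < ‖Y ω j‖} := by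
    rw [hlaw _ (· > 0) fun j => by omega, hlaw _ (· < 0) fun j => by omega]
    exact measure_visit_future_eq_past hνshift hS
  have hcompl (p : ℤ → Prop) :
      {ω | ∀ j, p j → ‖Y ω j‖ ≤ 1} = (Y ⁻¹' {y | ∃ j, p j ∧ y j ∈ S})ᶜ := by
    ext ω
    simp [S]
  refine ⟨?_, hexceed⟩
  rw [hcompl, hcompl, prob_compl_eq_one_sub (hYmeas (hvisits _)),
    prob_compl_eq_one_sub (hYmeas (hvisits _))]
  exact congrArg (1 - ·) hexceed

/-- **Alternative expression for the candidate extremal index.**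
`ϑ := P(sup_{j≥1} ‖Y_j‖ ≤ 1) = P(sup_{j≤−1} ‖Y_j‖ ≤ 1)`; equivalently,
`P(sup_{j≥1} ‖Y_j‖ > 1) = P(sup_{j≤−1} ‖Y_j‖ > 1)`. -/
theorem statement8
    -- `V` plays the role of `ℝ^d` (`d ≥ 1`) equipped with an arbitrary norm
    {V : Type*} [NormedAddCommGroup V] [NormedSpace ℝ V] [FiniteDimensional ℝ V]
    [Nontrivial V] [MeasurableSpace V] [BorelSpace V]
    (α : ℝ) (hα : 0 < α)
    -- the tail measure and its properties
    (ν : Measure (ℤ → V))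
    (hν0 : ν {0} = 0)
    (hν1 : ν {y : ℤ → V | 1 < ‖y 0‖} = 1)
    (hνshift : ν.map (backshift 1) = ν)
    (hνhom : ∀ A : Set (ℤ → V), MeasurableSet A → ∀ c : ℝ, 0 < c →
      ν ((fun x => c • x) '' A) = ENNReal.ofReal (c ^ (-α)) * ν A)
    -- the tail process `Y` and the spectral tail process `Θ`
    {Ω : Type*} [MeasurableSpace Ω] (P : Measure Ω) [IsProbabilityMeasure P]
    (Y : Ω → ℤ → V) (hYmeas : Measurable Y)
    (hYlaw : P.map Y = ν.restrict {y : ℤ → V | 1 < ‖y 0‖})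
    (Θ : Ω → ℤ → V) (hΘdef : ∀ ω, Θ ω = ‖Y ω 0‖⁻¹ • Y ω)
    (hPareto : ∀ u : ℝ, 1 ≤ u → P {ω | u < ‖Y ω 0‖} = ENNReal.ofReal (u ^ (-α)))
    (hindep : IndepFun (fun ω => ‖Y ω 0‖) Θ P)
    (hpolar : ∀ H : (ℤ → V) → ℝ≥0∞, Measurable H →
      ∫⁻ y in {y : ℤ → V | y 0 ≠ 0}, H y ∂ν
        = ∫⁻ r in Ioi (0 : ℝ),
            (∫⁻ ω, H (r • Θ ω) ∂P) * ENNReal.ofReal (α * r ^ (-α - 1)))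
    :
    P {ω | ∀ j : ℤ, 1 ≤ j → ‖Y ω j‖ ≤ 1} = P {ω | ∀ j : ℤ, j ≤ -1 → ‖Y ω j‖ ≤ 1} ∧
      P {ω | ∃ j : ℤ, 1 ≤ j ∧ 1 < ‖Y ω j‖} = P {ω | ∃ j : ℤ, j ≤ -1 ∧ 1 < ‖Y ω j‖} :=
  statement8_general ν hνshift P Y hYmeas hYlaw
end
end
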